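/- For all integers w ≥ 0 and p ≥ p_w, the graph G_{w,p} contains every tree with at most γ(w,p) edges. -/

import Mathlib

open SimpleGraph

def Contains {V W : Type*} (U : SimpleGraph V) (G : SimpleGraph W) : Prop :=
  ∃ f : G →g U, Function.Injective f

def IsWSubtree {V : Type*} (F : SimpleGraph V) (W : Set V) (H : F.Subgraph) : Prop :=
  H.coe.IsTree ∧ (∀ w ∈ W, (H.neighborSet w).Subsingleton) ∧
    ∀ H' : F.Subgraph, H ≤ H' → H'.coe.IsTree →
      (∀ w ∈ W, (H'.neighborSet w).Subsingleton) → H' = H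

noncomputable def ratio (w : ℕ) : ℝ := (2 + (2/3 : ℝ) ^ w) / (1 + (2/3 : ℝ) ^ w)
noncomputable def alphaF (w p : ℕ) : ℝ := (1 / (1 + (2/3 : ℝ) ^ w)) * ratio w ^ (p - 1)
noncomputable def betaF (w : ℕ) : ℝ := 3 * (3/2 : ℝ) ^ w
noncomputable def gammaF (w p : ℕ) : ℝ := ratio w ^ p
noncomputable def deltaF (w : ℕ) : ℝ := (2 + (2/3 : ℝ) ^ w) * betaF w
noncomputable def pW (w : ℕ) : ℕ := sInf {p : ℕ | betaF w ≤ alphaF w (p + 1)}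

noncomputable def betaK (k w : ℕ) : ℝ := (2 * k + 4) * (3/2 : ℝ) ^ w
noncomputable def deltaK (k w : ℕ) : ℝ := (2 + (2/3 : ℝ) ^ w) * betaK k w
noncomputable def pWK (k w : ℕ) : ℕ := sInf {p : ℕ | betaK k w ≤ alphaF w (p + 1)}

def JVert (a b : ℕ) : ℕ → Type
  | 0 => Fin b
  | m + 1 => Fin a ⊕ (JVert a b m ⊕ JVert a b m)

def JGraph (a b : ℕ) : (m : ℕ) → SimpleGraph (JVert a b m)
  | 0 => ⊤
  | m + 1 => SimpleGraph.fromRel (fun u v =>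
      match u, v with
      | Sum.inl _, _ => True
      | Sum.inr (Sum.inl x), Sum.inr (Sum.inl y) => (JGraph a b m).Adj x y
      | Sum.inr (Sum.inr x), Sum.inr (Sum.inr y) => (JGraph a b m).Adj x y
      | _, _ => False)

noncomputable def GwpVert (w p : ℕ) : Type := JVert (w + 1) ⌈deltaF w⌉₊ (p - pW w)
noncomputable def Gwp (w p : ℕ) : SimpleGraph (GwpVert w p) := JGraph _ _ _

noncomputable def GkwpVert (k w p : ℕ) : Type := JVert ((k + 1) * (w + 1)) ⌈deltaK k w⌉₊ (p - pWK k w)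
noncomputable def Gkwp (k w p : ℕ) : SimpleGraph (GkwpVert k w p) := JGraph _ _ _

structure TreeDecomp {V : Type*} {ι : Type*} (G : SimpleGraph V) (T : SimpleGraph ι) where
  isTree : T.IsTree
  bag : ι → Set V
  bag_connected : ∀ v : V, (T.induce {x | v ∈ bag x}).Connected
  bag_edge : ∀ ⦃u v : V⦄, G.Adj u v → ∃ x, u ∈ bag x ∧ v ∈ bag x

def HasTreewidthLE {V : Type*} (G : SimpleGraph V) (k : ℕ) : Prop :=
  ∃ (ι : Type) (T : SimpleGraph ι) (td : TreeDecomp G T), ∀ x, (td.bag x).ncard ≤ k + 1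


set_option linter.unusedSectionVars false

section Components
variable {V : Type} [Fintype V] [DecidableEq V] (F : SimpleGraph V)

/-- reachability via a walk whose support stays in `W` -/
def reachIn (W : Finset V) (x y : V) : Prop :=
  ∃ p : F.Walk x y, ∀ z ∈ p.support, z ∈ W

open scoped Classical in
noncomputable def comp (W : Finset V) (x : V) : Finset V :=
  W.filter (fun y => reachIn F W x y)

variable {F}

lemma mem_comp {W : Finset V} {x y : V} : y ∈ comp F W x ↔ y ∈ W ∧ reachIn F W x y := by
  classical
  simp [comp]

lemma reachIn_refl {W : Finset V} {x : V} (hx : x ∈ W) : reachIn F W x x :=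
  ⟨Walk.nil, by simp [hx]⟩

lemma reachIn_symm {W : Finset V} {x y : V} (h : reachIn F W x y) : reachIn F W y x := by
  obtain ⟨p, hp⟩ := h
  exact ⟨p.reverse, by intro z hz; apply hp; simpa [Walk.support_reverse] using hz⟩

lemma reachIn_trans {W : Finset V} {x y z : V} (h : reachIn F W x y) (h' : reachIn F W y z) :
    reachIn F W x z := by
  obtain ⟨p, hp⟩ := h
  obtain ⟨q, hq⟩ := h'
  refine ⟨p.append q, ?_⟩
  intro u hu
  rcases (Walk.mem_support_append_iff p q).1 hu with h | h
  · exact hp u h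
  · exact hq u h

lemma reachIn_mem_left {W : Finset V} {x y : V} (h : reachIn F W x y) : x ∈ W := by
  obtain ⟨p, hp⟩ := h; exact hp x p.start_mem_support

lemma reachIn_mem_right {W : Finset V} {x y : V} (h : reachIn F W x y) : y ∈ W := by
  obtain ⟨p, hp⟩ := h; exact hp y p.end_mem_support

lemma mem_comp_self {W : Finset V} {x : V} (hx : x ∈ W) : x ∈ comp F W x :=
  mem_comp.2 ⟨hx, reachIn_refl hx⟩

lemma comp_subset {W : Finset V} {x : V} : comp F W x ⊆ W := by
  intro y hy; exact (mem_comp.1 hy).1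

lemma comp_eq_of_mem {W : Finset V} {x y : V} (h : y ∈ comp F W x) :
    comp F W y = comp F W x := by
  obtain ⟨hyW, hxy⟩ := mem_comp.1 h
  ext z
  simp only [mem_comp]
  constructor
  · rintro ⟨hz, hr⟩; exact ⟨hz, reachIn_trans hxy hr⟩
  · rintro ⟨hz, hr⟩; exact ⟨hz, reachIn_trans (reachIn_symm hxy) hr⟩

lemma comp_eq_comp_of_mem_both {W : Finset V} {x y z : V} (hx : z ∈ comp F W x)
    (hy : z ∈ comp F W y) : comp F W x = comp F W y := by
  rw [← comp_eq_of_mem hx, comp_eq_of_mem hy]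

lemma adj_mem_comp {W : Finset V} {x a b : V} (ha : a ∈ comp F W x) (hb : b ∈ W)
    (hab : F.Adj a b) : b ∈ comp F W x := by
  obtain ⟨haW, ⟨p, hp⟩⟩ := mem_comp.1 ha
  refine mem_comp.2 ⟨hb, p.concat hab, ?_⟩
  intro z hz
  rw [Walk.support_concat] at hz
  simp only [List.concat_eq_append, List.mem_append, List.mem_singleton] at hz
  rcases hz with h | h
  · exact hp z h
  · subst h; exact hb

lemma comp_mono {W W' : Finset V} {x : V} (h : W ⊆ W') : comp F W x ⊆ comp F W' x := by
  intro y hy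
  obtain ⟨hyW, ⟨p, hp⟩⟩ := mem_comp.1 hy
  exact mem_comp.2 ⟨h hyW, p, fun z hz => h (hp z hz)⟩

lemma reachIn_closed {W X : Finset V} (hcl : ∀ a ∈ X, ∀ b ∈ W, F.Adj a b → b ∈ X)
    {x y : V} (h : reachIn F W x y) (hx : x ∈ X) : y ∈ X := by
  obtain ⟨p, hp⟩ := h
  have key : ∀ (a b : V) (q : F.Walk a b), (∀ z ∈ q.support, z ∈ W) → a ∈ X → b ∈ X := by
    intro a b q
    induction q with
    | nil => intro _ ha; exact ha
    | @cons u v w huv q ih =>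
      intro hq hu
      exact ih (fun z hz => hq z (by simp [Walk.support_cons, hz]))
        (hcl u hu v (hq v (by simp [Walk.support_cons])) huv)
  exact key x y p hp hx

lemma comp_erase_of_not_reach {W : Finset V} {x c : V} (h : ¬ reachIn F W x c) :
    comp F W x = comp F (W.erase c) x := by
  apply Finset.Subset.antisymm
  · intro y hy
    obtain ⟨hyW, ⟨p, hp⟩⟩ := mem_comp.1 hy
    have hc : c ∉ p.support := by
      intro hc
      exact h ⟨p.takeUntil c hc, fun z hz => hp z (Walk.support_takeUntil_subset p hc hz)⟩
    refine mem_comp.2 ⟨Finset.mem_erase.2 ⟨fun hyc => hc (hyc ▸ p.end_mem_support), hyW⟩, p, ?_⟩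
    intro z hz
    exact Finset.mem_erase.2 ⟨fun hzc => hc (hzc ▸ hz), hp z hz⟩
  · exact comp_mono (Finset.erase_subset _ _)

/-- the union of all components of `W` is `W` -/
lemma biUnion_comp_eq (W : Finset V) : (W.image (comp F W)).biUnion id = W := by
  apply Finset.Subset.antisymm
  · intro y hy
    simp only [Finset.mem_biUnion, Finset.mem_image, id] at hy
    obtain ⟨C, ⟨z, hz, rfl⟩, hyC⟩ := hy
    exact comp_subset hyC
  · intro y hy
    simp only [Finset.mem_biUnion, Finset.mem_image, id]
    exact ⟨comp F W y, ⟨y, hy, rfl⟩, mem_comp_self hy⟩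

lemma comp_pairwise_disjoint (W : Finset V) :
    ∀ C ∈ W.image (comp F W), ∀ D ∈ W.image (comp F W), C ≠ D → Disjoint C D := by
  intro C hC D hD hne
  simp only [Finset.mem_image] at hC hD
  obtain ⟨x, hx, rfl⟩ := hC
  obtain ⟨y, hy, rfl⟩ := hD
  rw [Finset.disjoint_left]
  intro z hzx hzy
  exact hne (comp_eq_comp_of_mem_both hzx hzy)

lemma sum_card_comps (W : Finset V) : ∑ C ∈ W.image (comp F W), C.card = W.card := by
  rw [← Finset.card_biUnion (comp_pairwise_disjoint W)]
  · rw [show (W.image (comp F W)).biUnion (fun C => C) = W from biUnion_comp_eq W]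

lemma card_biUnion_subset {ι : Finset (Finset V)} {I : Finset (Finset V)} (hI : I ⊆ ι)
    (hdisj : ∀ C ∈ ι, ∀ D ∈ ι, C ≠ D → Disjoint C D) :
    (I.biUnion id).card = ∑ C ∈ I, C.card := by
  exact Finset.card_biUnion (fun C hC D hD h => hdisj C (hI hC) D (hI hD) h)


lemma unique_adj_of_acyclic {F : SimpleGraph V} (hF : F.IsAcyclic) {W : Finset V} {c a b : V}
    (hc : c ∉ W) (hr : reachIn F W a b) (ha : F.Adj c a) (hb : F.Adj c b) : a = b := by
  by_contra hne
  obtain ⟨p, hp⟩ := hr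
  have hcsup : c ∉ p.support := fun h => hc (hp c h)
  have hq : c ∉ (p.toPath : F.Walk a b).support :=
    fun h => hcsup (Walk.support_toPath_subset p h)
  have hr2 : (Walk.cons ha.symm (Walk.cons hb Walk.nil) : F.Walk a b).IsPath := by
    rw [Walk.cons_isPath_iff, Walk.cons_isPath_iff]
    refine ⟨⟨Walk.IsPath.nil, by simp [hb.ne]⟩, ?_⟩
    simp [Walk.support_cons, Walk.support_nil]
    exact ⟨ha.ne', hne⟩
  have := hF.path_unique p.toPath ⟨_, hr2⟩
  apply hq
  rw [this]
  simp [Walk.support_cons]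

lemma centroid {F : SimpleGraph V} (hF : F.IsAcyclic) (U : Finset V) (hU : U.Nonempty) :
    ∃ c ∈ U, ∀ z ∈ U.erase c, 2 * (comp F (U.erase c) z).card ≤ U.card := by
  classical
  set f : V → ℕ := fun c => ((U.erase c).image (comp F (U.erase c))).sup Finset.card with hf
  obtain ⟨c, hcU, hcmin⟩ := Finset.exists_min_image U f hU
  refine ⟨c, hcU, ?_⟩
  by_contra hbad
  push_neg at hbad
  obtain ⟨z, hz, hzbig⟩ := hbad
  set W' : Finset V := U.erase c with hW'
  set C : Finset V := comp F W' z with hC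
  have hCim : C ∈ W'.image (comp F W') := Finset.mem_image.2 ⟨z, hz, rfl⟩
  have hCfc : C.card ≤ f c := Finset.le_sup hCim
  have hCsub : C ⊆ W' := comp_subset
  have hCU : C ⊆ U := hCsub.trans (Finset.erase_subset _ _)
  have hCn : 2 * C.card > U.card := hzbig
  have hCpos : 0 < C.card := Finset.card_pos.2 ⟨z, mem_comp_self hz⟩
  -- choose c' in C such that every neighbor of c inside C equals c'
  have hex : ∃ c' ∈ C, ∀ y ∈ C, F.Adj c y → y = c' := by
    by_cases hnb : ∃ y ∈ C, F.Adj c y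
    · obtain ⟨y, hyC, hy⟩ := hnb
      refine ⟨y, hyC, fun y' hy'C hy' => ?_⟩
      have hreach : reachIn F W' y' y := by
        have h1 := (mem_comp.1 hyC).2
        have h2 := (mem_comp.1 hy'C).2
        exact reachIn_trans (reachIn_symm h2) h1
      exact unique_adj_of_acyclic hF (Finset.notMem_erase c U) hreach hy' hy
    · push_neg at hnb
      exact ⟨z, mem_comp_self hz, fun y hy hadj => absurd hadj (hnb y hy)⟩
  obtain ⟨c', hc'C, hc'uniq⟩ := hex
  have hc'W' : c' ∈ W' := hCsub hc'C
  have hc'U : c' ∈ U := (Finset.erase_subset _ _) hc'W'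
  have hc'ne : c' ≠ c := Finset.ne_of_mem_erase hc'W'
  have hcW'' : c ∈ U.erase c' := Finset.mem_erase.2 ⟨hc'ne.symm, hcU⟩
  set W'' : Finset V := U.erase c' with hW''
  -- every component of U.erase c' is smaller than C
  have hkey : ∀ D ∈ W''.image (comp F W''), D.card < f c := by
    intro D hD
    obtain ⟨y, hyW'', rfl⟩ := Finset.mem_image.1 hD
    by_cases hyc : reachIn F W'' y c
    · -- the component contains c; it avoids C entirely
      have hsub : comp F W'' y ⊆ W'' \ C := by
        have hcl : ∀ a ∈ W'' \ C, ∀ b ∈ W'', F.Adj a b → b ∈ W'' \ C := by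
          intro a ha b hb hab
          rw [Finset.mem_sdiff] at ha ⊢
          refine ⟨hb, fun hbC => ?_⟩
          by_cases hac : a = c
          · subst hac
            exact (Finset.mem_erase.1 hb).1 (hc'uniq b hbC hab)
          · have haW' : a ∈ W' := Finset.mem_erase.2 ⟨hac, (Finset.mem_erase.1 ha.1).2⟩
            exact ha.2 (by
              have : a ∈ comp F W' z := adj_mem_comp hbC haW' hab.symm
              exact this)
        intro d hd
        have hcm : c ∈ comp F W'' y := mem_comp.2 ⟨hcW'', hyc⟩
        have hcy : comp F W'' c = comp F W'' y := comp_eq_of_mem hcm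
        have hdc : reachIn F W'' c d := by
          rw [← hcy] at hd
          exact (mem_comp.1 hd).2
        refine reachIn_closed hcl hdc ?_
        rw [Finset.mem_sdiff]
        exact ⟨hcW'', fun hcC => (Finset.notMem_erase c U) (hCsub hcC)⟩
      calc (comp F W'' y).card ≤ (W'' \ C).card := Finset.card_le_card hsub
        _ ≤ (U \ C).card := Finset.card_le_card
            (Finset.sdiff_subset_sdiff (Finset.erase_subset _ _) (le_refl _))
        _ = U.card - C.card := Finset.card_sdiff_of_subset hCU
        _ < C.card := by omega
        _ ≤ f c := hCfc
    · -- the component avoids c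
      have heq : comp F W'' y = comp F (W''.erase c) y := comp_erase_of_not_reach hyc
      have hcomm : W''.erase c = W'.erase c' := by
        rw [hW'', hW']; exact Finset.erase_right_comm
      have hyW' : y ∈ W' := by
        have hy2 : y ∈ W''.erase c := by
          refine Finset.mem_erase.2 ⟨fun hyceq => hyc ?_, hyW''⟩
          subst hyceq; exact reachIn_refl hyW''
        rw [hcomm] at hy2
        exact (Finset.erase_subset _ _) hy2
      have hsub2 : comp F W'' y ⊆ comp F W' y := by
        rw [heq, hcomm]; exact comp_mono (Finset.erase_subset _ _)
      by_cases hyC : y ∈ C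
      · -- comp F W' y = C, and c' is not in comp F W'' y
        have hCy : comp F W' y = C := comp_eq_of_mem hyC
        have hsub3 : comp F W'' y ⊆ C.erase c' := by
          intro d hd
          refine Finset.mem_erase.2 ⟨?_, hCy ▸ hsub2 hd⟩
          intro hdc'
          subst hdc'
          exact (Finset.mem_erase.1 (comp_subset hd)).1 rfl
        calc (comp F W'' y).card ≤ (C.erase c').card := Finset.card_le_card hsub3
          _ < C.card := Finset.card_erase_lt_of_mem hc'C
          _ ≤ f c := hCfc
      · -- comp F W' y is disjoint from C
        have hdisj : Disjoint (comp F W' y) C := by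
          rw [Finset.disjoint_left]
          intro d hd hdC
          have hyz : comp F W' y = comp F W' z := comp_eq_comp_of_mem_both hd hdC
          have h1 : y ∈ comp F W' y := mem_comp_self hyW'
          rw [hyz] at h1
          exact hyC h1
        have hsub4 : comp F W'' y ⊆ W' \ C := by
          intro d hd
          rw [Finset.mem_sdiff]
          exact ⟨comp_subset (hsub2 hd), Finset.disjoint_left.1 hdisj (hsub2 hd)⟩
        calc (comp F W'' y).card ≤ (W' \ C).card := Finset.card_le_card hsub4
          _ ≤ W'.card - C.card := le_of_eq (Finset.card_sdiff_of_subset hCsub)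
          _ < C.card := by
              have : W'.card ≤ U.card := Finset.card_le_card (Finset.erase_subset _ _)
              omega
          _ ≤ f c := hCfc
  have hfc' : f c' < f c :=
    (Finset.sup_lt_iff (by simpa using lt_of_lt_of_le hCpos hCfc)).2 hkey
  exact absurd (hcmin c' hc'U) (by omega)

lemma centroid_select {F : SimpleGraph V} (hF : F.IsAcyclic) (U : Finset V) (hU : U.Nonempty)
    (L : ℝ) (hL0 : 0 ≤ L) :
    ∃ (c : V) (A₀ : Finset V), c ∈ U ∧ A₀ ⊆ U.erase c ∧
      (∀ a ∈ A₀, ∀ b ∈ U.erase c, b ∉ A₀ → ¬F.Adj a b) ∧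
      (A₀.card : ℝ) ≤ L ∧
      (A₀ = U.erase c ∨ ∃ C : Finset V, C ⊆ U.erase c ∧ Disjoint C A₀ ∧ C.Nonempty ∧
          2 * C.card ≤ U.card ∧
          (∀ a ∈ C, ∀ b ∈ U.erase c, b ∉ C → ¬F.Adj a b) ∧
          L < (A₀.card : ℝ) + (C.card : ℝ)) := by
  classical
  obtain ⟨c, hcU, hcent⟩ := centroid hF U hU
  set W' : Finset V := U.erase c with hW'
  set P : Finset (Finset V) :=
    W'.powerset.filter (fun A => (∀ a ∈ A, comp F W' a ⊆ A) ∧ (A.card : ℝ) ≤ L) with hP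
  have hPne : P.Nonempty := ⟨∅, by simp [hP, hL0]⟩
  obtain ⟨A₀, hA₀P, hmax⟩ := Finset.exists_max_image P Finset.card hPne
  simp only [hP, Finset.mem_filter, Finset.mem_powerset] at hA₀P
  obtain ⟨hA₀sub, hA₀uc, hA₀L⟩ := hA₀P
  have hedges : ∀ a ∈ A₀, ∀ b ∈ W', b ∉ A₀ → ¬F.Adj a b := by
    intro a ha b hb hbA hab
    exact hbA (hA₀uc a ha (adj_mem_comp (mem_comp_self (hA₀sub ha)) hb hab))
  refine ⟨c, A₀, hcU, hA₀sub, hedges, hA₀L, ?_⟩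
  by_cases hall : W' ⊆ A₀
  · exact Or.inl (Finset.Subset.antisymm hA₀sub hall)
  · right
    obtain ⟨b, hbW', hbA₀⟩ := Finset.not_subset.1 hall
    set C : Finset V := comp F W' b with hCdef
    have hCsub : C ⊆ W' := comp_subset
    have hCdisj : Disjoint C A₀ := by
      rw [Finset.disjoint_left]
      intro x hxC hxA
      exact hbA₀ (hA₀uc x hxA (by rw [comp_eq_of_mem hxC]; exact mem_comp_self hbW'))
    have hCne : C.Nonempty := ⟨b, mem_comp_self hbW'⟩
    have hCbound : 2 * C.card ≤ U.card := hcent b hbW'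
    have hCedges : ∀ a ∈ C, ∀ b' ∈ W', b' ∉ C → ¬F.Adj a b' := by
      intro a ha b' hb' hb'C hab
      apply hb'C
      have hmem : b' ∈ comp F W' a := adj_mem_comp (mem_comp_self (hCsub ha)) hb' hab
      rw [comp_eq_of_mem ha] at hmem
      exact hmem
    refine ⟨C, hCsub, hCdisj, hCne, hCbound, hCedges, ?_⟩
    by_contra hle
    push_neg at hle
    have hunion : A₀ ∪ C ∈ P := by
      simp only [hP, Finset.mem_filter, Finset.mem_powerset]
      refine ⟨Finset.union_subset hA₀sub hCsub, ?_, ?_⟩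
      · intro a ha
        rcases Finset.mem_union.1 ha with h | h
        · exact (hA₀uc a h).trans Finset.subset_union_left
        · rw [comp_eq_of_mem h]
          exact hCdef ▸ Finset.subset_union_right
      · rw [Finset.card_union_of_disjoint hCdisj.symm]
        push_cast
        linarith
    have hcard := hmax _ hunion
    rw [Finset.card_union_of_disjoint hCdisj.symm] at hcard
    have := Finset.card_pos.2 hCne
    omega

lemma windowed {F : SimpleGraph V} (hF : F.IsAcyclic) :
    ∀ (t : ℕ) (U : Finset V) (L : ℝ), 0 ≤ L → L ≤ (U.card : ℝ) →
    ∃ S A : Finset V, S ⊆ U ∧ A ⊆ U \ S ∧ S.card ≤ t + 1 ∧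
      (∀ a ∈ A, ∀ b ∈ U, b ∉ S → b ∉ A → ¬F.Adj a b) ∧
      (A.card : ℝ) ≤ L ∧ L - (U.card : ℝ) / 2 ^ (t+1) - 1 ≤ (A.card : ℝ) := by
  intro t
  induction t with
  | zero =>
    intro U L hL0 hLn
    rcases Finset.eq_empty_or_nonempty U with rfl | hU
    · have hL : L = 0 := le_antisymm (by simpa using hLn) hL0
      subst hL
      refine ⟨∅, ∅, by simp, by simp, by simp, by simp, by simp, ?_⟩
      simp only [Finset.card_empty, Nat.cast_zero]
      norm_num
    · obtain ⟨c, A₀, hcU, hA₀sub, hedges, hA₀L, hcase⟩ := centroid_select hF U hU L hL0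
      have hcard1 : 1 ≤ U.card := Finset.card_pos.2 hU
      have herase : ((U.erase c).card : ℝ) = (U.card : ℝ) - 1 := by
        rw [Finset.card_erase_of_mem hcU]
        push_cast [hcard1]
        ring
      refine ⟨{c}, A₀, by simpa using hcU, ?_, by simp, ?_, hA₀L, ?_⟩
      · rwa [← Finset.erase_eq]
      · intro a ha b hb hbS hbA
        exact hedges a ha b (Finset.mem_erase.2 ⟨by simpa using hbS, hb⟩) hbA
      · rcases hcase with heq | ⟨C, hCsub, hCdisj, hCne, hCbound, hCedges, hover⟩
        · rw [heq, herase]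
          have hpos : (0:ℝ) ≤ (U.card : ℝ) / 2 ^ (0 + 1) := by positivity
          linarith
        · have hChalf : (C.card : ℝ) ≤ (U.card : ℝ) / 2 := by
            have := hCbound
            have h2 : ((2 * C.card : ℕ) : ℝ) ≤ (U.card : ℝ) := by exact_mod_cast this
            push_cast at h2
            linarith
          have : (U.card : ℝ) / 2 ^ (0 + 1) = (U.card : ℝ) / 2 := by norm_num
          rw [this]
          linarith
  | succ t ih =>
    intro U L hL0 hLn
    rcases Finset.eq_empty_or_nonempty U with rfl | hU
    · have hL : L = 0 := le_antisymm (by simpa using hLn) hL0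
      subst hL
      refine ⟨∅, ∅, by simp, by simp, by simp, by simp, by simp, ?_⟩
      simp only [Finset.card_empty, Nat.cast_zero]
      norm_num
    · obtain ⟨c, A₀, hcU, hA₀sub, hedges, hA₀L, hcase⟩ := centroid_select hF U hU L hL0
      have hcard1 : 1 ≤ U.card := Finset.card_pos.2 hU
      have herase : ((U.erase c).card : ℝ) = (U.card : ℝ) - 1 := by
        rw [Finset.card_erase_of_mem hcU]
        push_cast [hcard1]
        ring
      rcases hcase with heq | ⟨C, hCsub, hCdisj, hCne, hCbound, hCedges, hover⟩
      · refine ⟨{c}, A₀, by simpa using hcU, ?_, by simp, ?_, hA₀L, ?_⟩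
        · rwa [← Finset.erase_eq]
        · intro a ha b hb hbS hbA
          exact hedges a ha b (Finset.mem_erase.2 ⟨by simpa using hbS, hb⟩) hbA
        · rw [heq, herase]
          have hpos : (0:ℝ) < (U.card : ℝ) / 2 ^ (t + 1 + 1) := by positivity
          linarith
      · -- recurse into C
        have hA₀C : Disjoint A₀ C := hCdisj.symm
        set L'' : ℝ := L - (A₀.card : ℝ) with hL''
        have hL''0 : 0 ≤ L'' := by rw [hL'']; linarith
        have hL''C : L'' ≤ (C.card : ℝ) := by rw [hL'']; linarith
        obtain ⟨Sp, Ap, hSpC, hApC, hSpcard, hApedges, hApL, hAplow⟩ := ih C L'' hL''0 hL''C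
        have hChalf : (C.card : ℝ) ≤ (U.card : ℝ) / 2 := by
          have h2 : ((2 * C.card : ℕ) : ℝ) ≤ (U.card : ℝ) := by exact_mod_cast hCbound
          push_cast at h2
          linarith
        have hApsubC : Ap ⊆ C := hApC.trans (Finset.sdiff_subset)
        have hdisjAAp : Disjoint A₀ Ap := hA₀C.mono_right hApsubC
        refine ⟨insert c Sp, A₀ ∪ Ap, ?_, ?_, ?_, ?_, ?_, ?_⟩
        · exact Finset.insert_subset hcU ((hSpC.trans hCsub).trans (Finset.erase_subset _ _))
        · intro a ha
          rcases Finset.mem_union.1 ha with h | h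
          · have haW' := hA₀sub h
            rw [Finset.mem_sdiff]
            refine ⟨(Finset.erase_subset _ _) haW', ?_⟩
            intro hmem
            rcases Finset.mem_insert.1 hmem with rfl | hmem2
            · exact (Finset.notMem_erase a U) haW'
            · exact Finset.disjoint_left.1 hA₀C h (hSpC hmem2)
          · have haC := hApsubC h
            rw [Finset.mem_sdiff]
            refine ⟨(Finset.erase_subset _ _) (hCsub haC), ?_⟩
            intro hmem
            rcases Finset.mem_insert.1 hmem with rfl | hmem2
            · exact (Finset.notMem_erase a U) (hCsub haC)
            · exact (Finset.mem_sdiff.1 (hApC h)).2 hmem2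
        · calc (insert c Sp).card ≤ Sp.card + 1 := Finset.card_insert_le _ _
            _ ≤ (t + 1) + 1 := by omega
        · intro a ha b hb hbS hbA
          have hbc : b ≠ c := fun h => hbS (h ▸ Finset.mem_insert_self c Sp)
          have hbW' : b ∈ U.erase c := Finset.mem_erase.2 ⟨hbc, hb⟩
          rcases Finset.mem_union.1 ha with h | h
          · exact hedges a h b hbW' (fun hbA₀ => hbA (Finset.mem_union_left _ hbA₀))
          · by_cases hbC : b ∈ C
            · exact hApedges a h b hbC (fun hbSp => hbS (Finset.mem_insert_of_mem hbSp))
                (fun hbAp => hbA (Finset.mem_union_right _ hbAp))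
            · exact fun hadj => hCedges a (hApsubC h) b hbW' hbC hadj
        · rw [Finset.card_union_of_disjoint hdisjAAp]
          push_cast
          linarith
        · rw [Finset.card_union_of_disjoint hdisjAAp]
          push_cast
          have hdivmono : (C.card : ℝ) / 2 ^ (t + 1) ≤ ((U.card : ℝ) / 2) / 2 ^ (t + 1) := by
            gcongr
          have hpow : ((U.card : ℝ) / 2) / 2 ^ (t + 1) = (U.card : ℝ) / 2 ^ (t + 1 + 1) := by
            rw [pow_succ]
            ring
          linarith

lemma septop {F : SimpleGraph V} (hF : F.IsAcyclic) (w : ℕ) (U : Finset V) (M : ℝ)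
    (hM2 : (U.card : ℝ) ≤ 2 * M)
    (hMw : ((U.card : ℝ) - 1 - M) / 2 ^ w ≤ 2 * M - (U.card : ℝ)) :
    ∃ S A : Finset V, S ⊆ U ∧ A ⊆ U \ S ∧ S.card ≤ w + 1 ∧
      (∀ a ∈ A, ∀ b ∈ (U \ S) \ A, ¬F.Adj a b) ∧
      (A.card : ℝ) ≤ M ∧ (((U \ S) \ A).card : ℝ) ≤ M := by
  classical
  have hM0 : 0 ≤ M := by
    have : (0:ℝ) ≤ (U.card : ℝ) := Nat.cast_nonneg _
    linarith
  rcases Finset.eq_empty_or_nonempty U with rfl | hU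
  · exact ⟨∅, ∅, by simp, by simp, by simp, by simp, by simpa using hM0, by simpa using hM0⟩
  obtain ⟨c, A₀, hcU, hA₀sub, hedges, hA₀L, hcase⟩ := centroid_select hF U hU M hM0
  have hcard1 : 1 ≤ U.card := Finset.card_pos.2 hU
  have herase : ((U.erase c).card : ℝ) = (U.card : ℝ) - 1 := by
    rw [Finset.card_erase_of_mem hcU]
    push_cast [hcard1]
    ring
  have hUsc : U \ {c} = U.erase c := (Finset.erase_eq U c).symm
  -- helper to compute card of (U \ S) \ A
  have cardB : ∀ S A : Finset V, S ⊆ U → A ⊆ U \ S →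
      ((((U \ S) \ A).card : ℝ)) = (U.card : ℝ) - (S.card : ℝ) - (A.card : ℝ) := by
    intro S A hS hA
    rw [Finset.card_sdiff_of_subset hA, Finset.card_sdiff_of_subset hS]
    have h1 : S.card ≤ U.card := Finset.card_le_card hS
    have h2 : A.card ≤ (U \ S).card := Finset.card_le_card hA
    rw [Finset.card_sdiff_of_subset hS] at h2
    push_cast [Nat.cast_sub h1, Nat.cast_sub h2]
    ring
  rcases hcase with heq | ⟨C, hCsub, hCdisj, hCne, hCbound, hCedges, hover⟩
  · -- A₀ is everything except c
    refine ⟨{c}, A₀, by simpa using hcU, by rwa [hUsc], by simp, ?_, hA₀L, ?_⟩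
    · intro a ha b hb
      rw [Finset.mem_sdiff, hUsc] at hb
      exact hedges a ha b hb.1 hb.2
    · have : ((U \ {c}) \ A₀).card = 0 := by
        rw [hUsc, heq]
        simp
      rw [this]
      exact_mod_cast hM0
  · have hChalf : (C.card : ℝ) ≤ (U.card : ℝ) / 2 := by
      have h2 : ((2 * C.card : ℕ) : ℝ) ≤ (U.card : ℝ) := by exact_mod_cast hCbound
      push_cast at h2
      linarith
    by_cases hB : (((U \ {c}) \ A₀).card : ℝ) ≤ M
    · refine ⟨{c}, A₀, by simpa using hcU, by rwa [hUsc], by simp, ?_, hA₀L, hB⟩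
      intro a ha b hb
      rw [Finset.mem_sdiff, hUsc] at hb
      exact hedges a ha b hb.1 hb.2
    · push_neg at hB
      by_cases hCbig : ((U.card : ℝ) - 1) - M ≤ (C.card : ℝ)
      · -- use C alone as one side
        refine ⟨{c}, C, by simpa using hcU, by rwa [hUsc], by simp, ?_, ?_, ?_⟩
        · intro a ha b hb
          rw [Finset.mem_sdiff, hUsc] at hb
          exact hCedges a ha b hb.1 hb.2
        · linarith
        · rw [cardB {c} C (by simpa using hcU) (by rwa [hUsc])]
          simp only [Finset.card_singleton, Nat.cast_one]
          linarith
      · push_neg at hCbig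
        -- C is small; w = 0 gives a contradiction, otherwise recurse
        rcases Nat.eq_zero_or_pos w with rfl | hw
        · exfalso
          have h0 : ((U.card : ℝ) - 1 - M) / 2 ^ 0 = (U.card : ℝ) - 1 - M := by norm_num
          rw [h0] at hMw
          have hcB := cardB {c} A₀ (by simpa using hcU) (by rwa [hUsc])
          simp only [Finset.card_singleton, Nat.cast_one] at hcB
          rw [hcB] at hB
          linarith
        · obtain ⟨w', rfl⟩ : ∃ w', w = w' + 1 := ⟨w - 1, by omega⟩
          set L'' : ℝ := M - (A₀.card : ℝ) with hL''
          have hL''0 : 0 ≤ L'' := by rw [hL'']; linarith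
          have hL''C : L'' ≤ (C.card : ℝ) := by rw [hL'']; linarith
          obtain ⟨Sp, Ap, hSpC, hApC, hSpcard, hApedges, hApL, hAplow⟩ :=
            windowed hF w' C L'' hL''0 hL''C
          have hApsubC : Ap ⊆ C := hApC.trans (Finset.sdiff_subset)
          have hA₀C : Disjoint A₀ C := hCdisj.symm
          have hdisjAAp : Disjoint A₀ Ap := hA₀C.mono_right hApsubC
          have hSsub : insert c Sp ⊆ U :=
            Finset.insert_subset hcU ((hSpC.trans hCsub).trans (Finset.erase_subset _ _))
          have hAsub : A₀ ∪ Ap ⊆ U \ insert c Sp := by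
            intro a ha
            rcases Finset.mem_union.1 ha with h | h
            · have haW' := hA₀sub h
              rw [Finset.mem_sdiff]
              refine ⟨(Finset.erase_subset _ _) haW', ?_⟩
              intro hmem
              rcases Finset.mem_insert.1 hmem with rfl | hmem2
              · exact (Finset.notMem_erase a U) haW'
              · exact Finset.disjoint_left.1 hA₀C h (hSpC hmem2)
            · have haC := hApsubC h
              rw [Finset.mem_sdiff]
              refine ⟨(Finset.erase_subset _ _) (hCsub haC), ?_⟩
              intro hmem
              rcases Finset.mem_insert.1 hmem with rfl | hmem2
              · exact (Finset.notMem_erase a U) (hCsub haC)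
              · exact (Finset.mem_sdiff.1 (hApC h)).2 hmem2
          have hcardA : ((A₀ ∪ Ap).card : ℝ) = (A₀.card : ℝ) + (Ap.card : ℝ) := by
            rw [Finset.card_union_of_disjoint hdisjAAp]
            push_cast
            ring
          have hScard1 : (1 : ℝ) ≤ ((insert c Sp).card : ℝ) := by
            have : 0 < (insert c Sp).card := Finset.card_pos.2 ⟨c, Finset.mem_insert_self _ _⟩
            exact_mod_cast this
          refine ⟨insert c Sp, A₀ ∪ Ap, hSsub, hAsub, ?_, ?_, ?_, ?_⟩
          · calc (insert c Sp).card ≤ Sp.card + 1 := Finset.card_insert_le _ _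
              _ ≤ (w' + 1) + 1 := by omega
          · intro a ha b hb
            rw [Finset.mem_sdiff, Finset.mem_sdiff] at hb
            obtain ⟨⟨hbU, hbS⟩, hbA⟩ := hb
            have hbc : b ≠ c := fun h => hbS (h ▸ Finset.mem_insert_self c Sp)
            have hbW' : b ∈ U.erase c := Finset.mem_erase.2 ⟨hbc, hbU⟩
            rcases Finset.mem_union.1 ha with h | h
            · exact hedges a h b hbW' (fun hbA₀ => hbA (Finset.mem_union_left _ hbA₀))
            · by_cases hbC : b ∈ C
              · exact hApedges a h b hbC (fun hbSp => hbS (Finset.mem_insert_of_mem hbSp))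
                  (fun hbAp => hbA (Finset.mem_union_right _ hbAp))
              · exact fun hadj => hCedges a (hApsubC h) b hbW' hbC hadj
          · rw [hcardA]; linarith
          · rw [cardB _ _ hSsub hAsub, hcardA]
            have hdivmono : (C.card : ℝ) / 2 ^ (w' + 1) ≤
                ((U.card : ℝ) - 1 - M) / 2 ^ (w' + 1) := by
              have hle : (C.card : ℝ) ≤ (U.card : ℝ) - 1 - M := le_of_lt hCbig
              gcongr
            linarith

end Components

section Numerics

lemma xw_pos (w : ℕ) : (0:ℝ) < (2/3:ℝ)^w := by positivity

lemma xw_le_one (w : ℕ) : (2/3:ℝ)^w ≤ 1 := by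
  apply pow_le_one₀ <;> norm_num

lemma ratio_gt_one (w : ℕ) : 1 < ratio w := by
  rw [ratio, lt_div_iff₀ (by positivity)]
  linarith [xw_pos w]

lemma ratio_le_two (w : ℕ) : ratio w ≤ 2 := by
  rw [ratio, div_le_iff₀ (by positivity)]
  linarith [xw_pos w]

lemma one_le_gamma (w p : ℕ) : 1 ≤ gammaF w p := by
  rw [gammaF]
  exact one_le_pow₀ (le_of_lt (ratio_gt_one w))

lemma gamma_succ (w p : ℕ) : gammaF w (p + 1) = ratio w * gammaF w p := by
  rw [gammaF, gammaF, pow_succ]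
  ring

lemma half_pow_le (w : ℕ) : (1:ℝ) / 2 ^ w ≤ (2/3:ℝ)^w := by
  rw [show (1:ℝ)/2^w = (1/2:ℝ)^w by rw [div_pow]; norm_num]
  apply pow_le_pow_left₀ <;> norm_num

lemma gamma_pW_lt_delta (w : ℕ) : gammaF w (pW w) < deltaF w := by
  have hx := xw_pos w
  have hx1 := xw_le_one w
  have hxx : (0:ℝ) < 1 + (2/3:ℝ)^w := by linarith
  have hb : 3 ≤ betaF w := by
    rw [betaF]
    nlinarith [one_le_pow₀ (by norm_num : (1:ℝ) ≤ 3/2) (n := w)]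
  rcases Nat.eq_zero_or_pos (pW w) with h0 | hpos
  · rw [h0, gammaF, pow_zero, deltaF]
    nlinarith
  · have hnm : pW w - 1 ∉ {p : ℕ | betaF w ≤ alphaF w (p + 1)} :=
      Nat.notMem_of_lt_sInf (by rw [pW] at *; omega)
    simp only [Set.mem_setOf_eq, not_le] at hnm
    have h1 : pW w - 1 + 1 = pW w := by omega
    rw [h1, alphaF] at hnm
    have h2 : gammaF w (pW w) = ratio w * ratio w ^ (pW w - 1) := by
      rw [gammaF, ← pow_succ']
      congr 1
      omega
    have h3 : ratio w ^ (pW w - 1) < (1 + (2/3:ℝ)^w) * betaF w := by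
      have hmul := mul_lt_mul_of_pos_left hnm hxx
      have heq : (1 + (2/3:ℝ)^w) * (1 / (1 + (2/3:ℝ)^w) * ratio w ^ (pW w - 1))
          = ratio w ^ (pW w - 1) := by
        field_simp
      rwa [heq] at hmul
    rw [h2, deltaF]
    have h4 : ratio w * ratio w ^ (pW w - 1) < ratio w * ((1 + (2/3:ℝ)^w) * betaF w) :=
      mul_lt_mul_of_pos_left h3 (lt_trans one_pos (ratio_gt_one w))
    calc ratio w * ratio w ^ (pW w - 1)
        < ratio w * ((1 + (2/3:ℝ)^w) * betaF w) := h4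
      _ = (2 + (2/3:ℝ)^w) * betaF w := by
          rw [ratio]
          field_simp

lemma main_ineqs (w : ℕ) (g n : ℝ) (hg : 1 ≤ g) (hn : n ≤ ratio w * g + 1) :
    n ≤ 2 * (g + 1) ∧ (n - 1 - (g + 1)) / 2 ^ w ≤ 2 * (g + 1) - n := by
  have hx := xw_pos w
  have hx1 := xw_le_one w
  set x : ℝ := (2/3:ℝ)^w with hxdef
  have hxx : 0 < 1 + x := by linarith
  have hxne : (1 + x) ≠ 0 := ne_of_gt hxx
  have hr2 : ratio w ≤ 2 := ratio_le_two w
  have e2 : ratio w - 1 = 1 / (1 + x) := by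
    rw [ratio, ← hxdef, div_sub_one hxne]
    congr 1
    ring
  have e4 : 2 - ratio w = x / (1 + x) := by
    rw [ratio, ← hxdef, eq_div_iff hxne]
    field_simp
    ring
  constructor
  · nlinarith
  · have hp : (0:ℝ) < 2 ^ w := by positivity
    have e1 : n - 1 - (g + 1) ≤ g / (1 + x) - 1 := by
      have h5 : n - 1 - (g+1) ≤ (ratio w - 1) * g - 1 := by nlinarith
      rw [e2] at h5
      calc n - 1 - (g+1) ≤ 1 / (1+x) * g - 1 := h5
        _ = g / (1+x) - 1 := by ring
    have e3 : x / (1 + x) * g + 1 ≤ 2 * (g + 1) - n := by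
      have h6 : (2 - ratio w) * g + 1 ≤ 2*(g+1) - n := by nlinarith
      rw [e4] at h6
      linarith
    have key : (g / (1 + x) - 1) / 2 ^ w ≤ x / (1 + x) * g + 1 := by
      have k1 : (g / (1 + x) - 1) / 2 ^ w ≤ (g / (1 + x)) / 2 ^ w := by
        gcongr
        linarith
      have k3 : (g / (1+x)) * (1 / 2 ^ w) ≤ (g / (1+x)) * x := by
        apply mul_le_mul_of_nonneg_left (half_pow_le w)
        positivity
      calc (g / (1 + x) - 1) / 2 ^ w ≤ (g / (1 + x)) / 2 ^ w := k1
        _ = (g / (1+x)) * (1 / 2 ^ w) := by ring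
        _ ≤ (g / (1+x)) * x := k3
        _ = x / (1+x) * g := by ring
        _ ≤ x / (1+x) * g + 1 := by linarith
    have mono : (n - 1 - (g + 1)) / 2 ^ w ≤ (g / (1 + x) - 1) / 2 ^ w := by
      gcongr
    linarith

end Numerics



section Embedding

lemma comap_acyclic {V W : Type} {F : SimpleGraph V} (hF : F.IsAcyclic) (f : W → V)
    (hf : Function.Injective f) : (F.comap f).IsAcyclic := by
  intro v p hp
  have hinj : Function.Injective (SimpleGraph.Hom.comap f F) := by
    intro a b h
    exact hf h
  exact hF _ (hp.map hinj)

lemma main_embed (w : ℕ) : ∀ (m : ℕ) (V : Type) [Fintype V] [DecidableEq V]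
    (F : SimpleGraph V), F.IsAcyclic →
    (Fintype.card V : ℝ) ≤ gammaF w (pW w + m) + 1 →
    ∃ f : F →g JGraph (w+1) (⌈deltaF w⌉₊) m, Function.Injective f := by
  intro m
  induction m with
  | zero =>
    intro V _ _ F hF hcard
    rw [Nat.add_zero] at hcard
    have h1 : gammaF w (pW w) < deltaF w := gamma_pW_lt_delta w
    have h2 : Fintype.card V ≤ ⌈deltaF w⌉₊ := by
      by_contra hcon
      push_neg at hcon
      have h3 : (⌈deltaF w⌉₊ : ℝ) + 1 ≤ (Fintype.card V : ℝ) := by exact_mod_cast hcon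
      have h4 := Nat.le_ceil (deltaF w)
      linarith
    obtain ⟨e⟩ : Nonempty (V ↪ Fin ⌈deltaF w⌉₊) :=
      Function.Embedding.nonempty_iff_card_le.2 (by simpa using h2)
    refine ⟨⟨fun v => e v, ?_⟩, fun a b hab => e.injective hab⟩
    intro a b hab
    exact (SimpleGraph.top_adj _ _).2 (fun h => hab.ne (e.injective h))
  | succ m ih =>
    intro V _ _ F hF hcard
    have hrw : pW w + (m + 1) = (pW w + m) + 1 := by omega
    rw [hrw, gamma_succ] at hcard
    set g : ℝ := gammaF w (pW w + m) with hgdef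
    have hg1 : 1 ≤ g := one_le_gamma w _
    obtain ⟨hM2, hMw⟩ := main_ineqs w g (Fintype.card V) hg1 hcard
    obtain ⟨S, A, hSsub, hAsub, hScard, hedges, hAcard, hBcard⟩ :=
      septop (F := F) hF w Finset.univ (g + 1)
        (by rw [Finset.card_univ]; exact hM2) (by rw [Finset.card_univ]; exact hMw)
    set B : Finset V := (Finset.univ \ S) \ A with hBdef
    have hScount : Fintype.card {x // x ∈ S} ≤ Fintype.card (Fin (w+1)) := by
      rw [Fintype.card_coe, Fintype.card_fin]; exact hScard
    obtain ⟨eS⟩ : Nonempty ({x // x ∈ S} ↪ Fin (w+1)) :=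
      Function.Embedding.nonempty_iff_card_le.2 hScount
    have hacA : (F.comap (Subtype.val : {x // x ∈ A} → V)).IsAcyclic :=
      comap_acyclic hF _ Subtype.val_injective
    have hacB : (F.comap (Subtype.val : {x // x ∈ B} → V)).IsAcyclic :=
      comap_acyclic hF _ Subtype.val_injective
    have hcardA : (Fintype.card {x // x ∈ A} : ℝ) ≤ gammaF w (pW w + m) + 1 := by
      rw [Fintype.card_coe, ← hgdef]; exact hAcard
    have hcardB : (Fintype.card {x // x ∈ B} : ℝ) ≤ gammaF w (pW w + m) + 1 := by
      rw [Fintype.card_coe, ← hgdef]; exact hBcard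
    obtain ⟨fA, hfA⟩ := ih {x // x ∈ A} (F.comap Subtype.val) hacA hcardA
    obtain ⟨fB, hfB⟩ := ih {x // x ∈ B} (F.comap Subtype.val) hacB hcardB
    have hmemB : ∀ v : V, v ∉ S → v ∉ A → v ∈ B := by
      intro v h1 h2
      rw [hBdef]
      simp [h1, h2]
    set φ : V → JVert (w+1) (⌈deltaF w⌉₊) (m+1) := fun v =>
      if hv : v ∈ S then Sum.inl (eS ⟨v, hv⟩)
      else if hv2 : v ∈ A then Sum.inr (Sum.inl (fA ⟨v, hv2⟩))
      else Sum.inr (Sum.inr (fB ⟨v, hmemB v hv hv2⟩)) with hφ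
    have hφS : ∀ (v : V) (h : v ∈ S), φ v = Sum.inl (eS ⟨v, h⟩) := by
      intro v h; rw [hφ]; exact dif_pos h
    have hφA : ∀ (v : V) (h1 : v ∉ S) (h2 : v ∈ A),
        φ v = Sum.inr (Sum.inl (fA ⟨v, h2⟩)) := by
      intro v h1 h2; rw [hφ]; exact (dif_neg h1).trans (dif_pos h2)
    have hφB : ∀ (v : V) (h1 : v ∉ S) (h2 : v ∉ A),
        φ v = Sum.inr (Sum.inr (fB ⟨v, hmemB v h1 h2⟩)) := by
      intro v h1 h2; rw [hφ]; exact (dif_neg h1).trans (dif_neg h2)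
    -- adjacency facts in the host graph
    have adjSS : ∀ (i j : Fin (w+1)), i ≠ j →
        (JGraph (w+1) (⌈deltaF w⌉₊) (m+1)).Adj (Sum.inl i) (Sum.inl j) := by
      intro i j hij
      simp [JGraph, SimpleGraph.fromRel_adj]
      refine (SimpleGraph.fromRel_adj _ _ _).2 ?_
      simp
      exact fun he => hij (Sum.inl_injective he)
    have adjSX : ∀ (i : Fin (w+1)) (y : JVert (w+1) (⌈deltaF w⌉₊) m ⊕ JVert (w+1) (⌈deltaF w⌉₊) m),
        (JGraph (w+1) (⌈deltaF w⌉₊) (m+1)).Adj (Sum.inl i) (Sum.inr y) := by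
      intro i y
      simp [JGraph, SimpleGraph.fromRel_adj]
      exact (SimpleGraph.fromRel_adj _ _ _).2 ⟨Sum.inl_ne_inr, Or.inl trivial⟩
    have adjXS : ∀ (i : Fin (w+1)) (y : JVert (w+1) (⌈deltaF w⌉₊) m ⊕ JVert (w+1) (⌈deltaF w⌉₊) m),
        (JGraph (w+1) (⌈deltaF w⌉₊) (m+1)).Adj (Sum.inr y) (Sum.inl i) := by
      intro i y
      simp [JGraph, SimpleGraph.fromRel_adj]
      exact (SimpleGraph.fromRel_adj _ _ _).2 ⟨Sum.inr_ne_inl, Or.inr trivial⟩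
    have adjAA : ∀ (x y : JVert (w+1) (⌈deltaF w⌉₊) m), (JGraph (w+1) (⌈deltaF w⌉₊) m).Adj x y →
        (JGraph (w+1) (⌈deltaF w⌉₊) (m+1)).Adj (Sum.inr (Sum.inl x)) (Sum.inr (Sum.inl y)) := by
      intro x y h
      simp [JGraph, SimpleGraph.fromRel_adj, h]
      refine (SimpleGraph.fromRel_adj _ _ _).2 ?_
      simp [h]
      exact fun heq => h.ne (Sum.inl_injective (Sum.inr_injective heq))
    have adjBB : ∀ (x y : JVert (w+1) (⌈deltaF w⌉₊) m), (JGraph (w+1) (⌈deltaF w⌉₊) m).Adj x y →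
        (JGraph (w+1) (⌈deltaF w⌉₊) (m+1)).Adj (Sum.inr (Sum.inr x)) (Sum.inr (Sum.inr y)) := by
      intro x y h
      simp [JGraph, SimpleGraph.fromRel_adj, h]
      refine (SimpleGraph.fromRel_adj _ _ _).2 ?_
      simp [h]
      exact fun heq => h.ne (Sum.inr_injective (Sum.inr_injective heq))
    -- injectivity
    have hinj : Function.Injective φ := by
      intro u v h
      by_cases hu : u ∈ S <;> by_cases hv : v ∈ S
      · rw [hφS u hu, hφS v hv] at h
        exact congrArg Subtype.val (eS.injective (Sum.inl_injective h))
      · by_cases hv2 : v ∈ A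
        · rw [hφS u hu, hφA v hv hv2] at h; exact absurd h Sum.inl_ne_inr
        · rw [hφS u hu, hφB v hv hv2] at h; exact absurd h Sum.inl_ne_inr
      · by_cases hu2 : u ∈ A
        · rw [hφA u hu hu2, hφS v hv] at h; exact absurd h Sum.inr_ne_inl
        · rw [hφB u hu hu2, hφS v hv] at h; exact absurd h Sum.inr_ne_inl
      · by_cases hu2 : u ∈ A <;> by_cases hv2 : v ∈ A
        · rw [hφA u hu hu2, hφA v hv hv2] at h
          exact congrArg Subtype.val (hfA (Sum.inl_injective (Sum.inr_injective h)))
        · rw [hφA u hu hu2, hφB v hv hv2] at h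
          exact absurd (Sum.inr_injective h) Sum.inl_ne_inr
        · rw [hφB u hu hu2, hφA v hv hv2] at h
          exact absurd (Sum.inr_injective h) Sum.inr_ne_inl
        · rw [hφB u hu hu2, hφB v hv hv2] at h
          exact congrArg Subtype.val (hfB (Sum.inr_injective (Sum.inr_injective h)))
    refine ⟨⟨φ, ?_⟩, hinj⟩
    intro u v huv
    have hneuv : u ≠ v := huv.ne
    by_cases hu : u ∈ S
    · by_cases hv : v ∈ S
      · rw [hφS u hu, hφS v hv]
        exact adjSS _ _ (fun h => hneuv (congrArg Subtype.val (eS.injective h)))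
      · by_cases hv2 : v ∈ A
        · rw [hφS u hu, hφA v hv hv2]
          exact adjSX _ _
        · rw [hφS u hu, hφB v hv hv2]
          exact adjSX _ _
    · by_cases hv : v ∈ S
      · by_cases hu2 : u ∈ A
        · rw [hφA u hu hu2, hφS v hv]
          exact adjXS _ _
        · rw [hφB u hu hu2, hφS v hv]
          exact adjXS _ _
      · by_cases hu2 : u ∈ A <;> by_cases hv2 : v ∈ A
        · rw [hφA u hu hu2, hφA v hv hv2]
          exact adjAA _ _ (fA.map_adj ((SimpleGraph.comap_adj).2 huv))
        · exact absurd huv (hedges u hu2 v (hmemB v hv hv2))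
        · exact absurd huv.symm (hedges v hv2 u (hmemB u hu hu2))
        · rw [hφB u hu hu2, hφB v hv hv2]
          exact adjBB _ _ (fB.map_adj ((SimpleGraph.comap_adj).2 huv))

end Embedding

theorem statement_5 (w p : ℕ) (hp : pW w ≤ p) {VT : Type} [Fintype VT]
    (T : SimpleGraph VT) (hT : T.IsTree) (hE : (T.edgeSet.ncard : ℝ) ≤ gammaF w p) :
    Contains (Gwp w p) T := by
  classical
  letI : DecidableEq VT := Classical.decEq VT
  have hconn : T.Connected := hT.isConnected
  have hne : Nonempty VT := hconn.nonempty
  have hcardV : (Fintype.card VT : ℝ) ≤ gammaF w p + 1 := by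
    have hedges := hT.card_edgeFinset
    have hfin : T.edgeSet.ncard = T.edgeFinset.card := by
      rw [Set.ncard_eq_toFinset_card']
      congr 1
    rw [hfin] at hE
    have : (Fintype.card VT : ℝ) = (T.edgeFinset.card : ℝ) + 1 := by
      rw [← hedges]
      push_cast
      ring
    linarith
  have hm : pW w + (p - pW w) = p := by omega
  obtain ⟨f, hf⟩ := main_embed w (p - pW w) VT T hT.IsAcyclic (by rw [hm]; exact hcardV)
  exact ⟨f, hf⟩
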